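/- arXiv:1910.12264 — 4 statements merged into one kernel-verified Lean document; each statement's English description precedes it below -/
import Mathlib

section
/- Let k ≥ 0 and m ≥ 1 be integers. For all real M, ε > 0 there exists a positive real γ = γ_{k,m}(M,ε) > 0 with lim_{ε→0⁺} γ_{k,m}(M,ε) = 0 for each fixed M, and with the following property: if f, g : [−1,1]^m → ℝ are C^{k+1} functions on the m-dimensional cube satisfying ‖f‖_{C^{k+1}} ≤ M, ‖g‖_{C^{k+1}} ≤ M and ‖f−g‖_{C^0} ≤ ε, then ‖f−g‖_{C^k} ≤ γ. -/
noncomputable section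

/-- The cube `[-1,1]^m ⊆ ℝ^m`. -/
def cube (m : ℕ) : Set (Fin m → ℝ) := Set.Icc (fun _ => -1) (fun _ => 1)

/-- The `i`-th partial derivative `∂_i u` of a function `u : ℝ^m → ℝ`. -/
def pd {m : ℕ} (i : Fin m) (u : (Fin m → ℝ) → ℝ) : (Fin m → ℝ) → ℝ :=
  fun x => fderiv ℝ u x (Pi.single i 1)

/-- The `C^r` norm of `u` on the cube `[-1,1]^m`, defined recursively by
`‖u‖_{C^0} = sup_{x ∈ [-1,1]^m} |u(x)|` and `‖u‖_{C^{r+1}} = ‖u‖_{C^r} + Σᵢ ‖∂ᵢu‖_{C^r}`. -/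
def Cnorm {m : ℕ} : ℕ → ((Fin m → ℝ) → ℝ) → ℝ
  | 0, u => sSup ((fun x => |u x|) '' cube m)
  | (r + 1), u => Cnorm r u + ∑ i : Fin m, Cnorm r (pd i u)

lemma cube_nonempty (m : ℕ) : (cube m).Nonempty :=
  ⟨fun _ => 0, by constructor <;> intro j <;> norm_num⟩

lemma cube_compact (m : ℕ) : IsCompact (cube m) := isCompact_Icc

lemma Cnorm_nonneg {m : ℕ} (r : ℕ) (u : (Fin m → ℝ) → ℝ) : 0 ≤ Cnorm r u := by
  induction r generalizing u with
  | zero =>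
    exact Real.sSup_nonneg (by rintro y ⟨x, -, rfl⟩; exact abs_nonneg _)
  | succ r ih =>
    have : 0 ≤ ∑ i : Fin m, Cnorm r (pd i u) := Finset.sum_nonneg fun i _ => ih _
    simpa [Cnorm] using add_nonneg (ih u) this

lemma Cnorm_le_succ {m : ℕ} (r : ℕ) (u : (Fin m → ℝ) → ℝ) : Cnorm r u ≤ Cnorm (r+1) u := by
  have : 0 ≤ ∑ i : Fin m, Cnorm r (pd i u) := Finset.sum_nonneg fun i _ => Cnorm_nonneg _ _
  simpa [Cnorm] using this

lemma Cnorm_zero_le {m : ℕ} (r : ℕ) (u : (Fin m → ℝ) → ℝ) : Cnorm 0 u ≤ Cnorm r u := by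
  induction r with
  | zero => exact le_rfl
  | succ r ih => exact ih.trans (Cnorm_le_succ r u)

lemma abs_le_Cnorm0 {m : ℕ} {u : (Fin m → ℝ) → ℝ} (hu : ContinuousOn u (cube m))
    {x : Fin m → ℝ} (hx : x ∈ cube m) : |u x| ≤ Cnorm 0 u :=
  le_csSup ((cube_compact m).bddAbove_image hu.abs) ⟨x, hx, rfl⟩

lemma Cnorm0_le {m : ℕ} {u : (Fin m → ℝ) → ℝ} {a : ℝ} (ha : 0 ≤ a)
    (h : ∀ x ∈ cube m, |u x| ≤ a) : Cnorm 0 u ≤ a :=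
  Real.sSup_le (by rintro y ⟨x, hx, rfl⟩; exact h x hx) ha

lemma Cnorm_congr {m : ℕ} {W : Set (Fin m → ℝ)} (hW : IsOpen W) (hc : cube m ⊆ W)
    {u v : (Fin m → ℝ) → ℝ} (h : ∀ x ∈ W, u x = v x) (r : ℕ) : Cnorm r u = Cnorm r v := by
  induction r generalizing u v with
  | zero =>
    have : (fun x => |u x|) '' cube m = (fun x => |v x|) '' cube m :=
      Set.image_congr fun x hx => by rw [h x (hc hx)]
    simp only [Cnorm, this]
  | succ r ih =>
    have hpd : ∀ i : Fin m, ∀ x ∈ W, pd i u x = pd i v x := by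
      intro i x hx
      have : u =ᶠ[nhds x] v := Filter.eventually_of_mem (hW.mem_nhds hx) h
      simp only [pd, this.fderiv_eq]
    simp only [Cnorm, ih h]
    congr 1
    exact Finset.sum_congr rfl fun i _ => ih (hpd i)

lemma pd_contDiffOn {m : ℕ} {U : Set (Fin m → ℝ)} (hU : IsOpen U) {u : (Fin m → ℝ) → ℝ}
    {r : ℕ} (hu : ContDiffOn ℝ (r + 1) u U) (i : Fin m) :
    ContDiffOn ℝ r (pd i u) U := by
  have h1 : ContDiffOn ℝ r (fderiv ℝ u) U :=
    hu.fderiv_of_isOpen hU (by exact_mod_cast le_rfl)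
  exact h1.clm_apply contDiffOn_const

lemma pd_differentiableAt {m : ℕ} {U : Set (Fin m → ℝ)} (hU : IsOpen U)
    {u : (Fin m → ℝ) → ℝ} {r : ℕ} (hu : ContDiffOn ℝ (r + 1 + 1) u U) (i : Fin m)
    {x : Fin m → ℝ} (hx : x ∈ U) : DifferentiableAt ℝ (pd i u) x := by
  have := (pd_contDiffOn hU hu i).differentiableOn (by simp)
  exact (this x hx).differentiableAt (hU.mem_nhds hx)


lemma Cnorm_sub_le {m : ℕ} (r : ℕ) {U : Set (Fin m → ℝ)} (hU : IsOpen U) (hc : cube m ⊆ U)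
    {f g : (Fin m → ℝ) → ℝ} (hf : ContDiffOn ℝ r f U) (hg : ContDiffOn ℝ r g U) :
    Cnorm r (f - g) ≤ Cnorm r f + Cnorm r g := by
  induction r generalizing f g with
  | zero =>
    refine Cnorm0_le (add_nonneg (Cnorm_nonneg _ _) (Cnorm_nonneg _ _)) fun x hx => ?_
    have h1 : |f x| ≤ Cnorm 0 f :=
      abs_le_Cnorm0 ((hf.continuousOn).mono hc) hx
    have h2 : |g x| ≤ Cnorm 0 g :=
      abs_le_Cnorm0 ((hg.continuousOn).mono hc) hx
    calc |(f - g) x| = |f x - g x| := by simp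
      _ ≤ |f x| + |g x| := abs_sub _ _
      _ ≤ _ := add_le_add h1 h2
  | succ r ih =>
    have hfd : ∀ x ∈ U, DifferentiableAt ℝ f x := fun x hx =>
      ((hf.differentiableOn (by simp)) x hx).differentiableAt
        (hU.mem_nhds hx)
    have hgd : ∀ x ∈ U, DifferentiableAt ℝ g x := fun x hx =>
      ((hg.differentiableOn (by simp)) x hx).differentiableAt
        (hU.mem_nhds hx)
    have hpd : ∀ i : Fin m, ∀ x ∈ U, pd i (f - g) x = (pd i f - pd i g) x := by
      intro i x hx
      simp only [pd, Pi.sub_apply]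
      have hfg : (f - g) = fun y => f y - g y := rfl
      rw [hfg, fderiv_fun_sub (hfd x hx) (hgd x hx)]
      simp
    have key : ∀ i : Fin m,
        Cnorm r (pd i (f - g)) ≤ Cnorm r (pd i f) + Cnorm r (pd i g) := by
      intro i
      rw [Cnorm_congr hU hc (hpd i) r]
      exact ih (pd_contDiffOn hU hf i) (pd_contDiffOn hU hg i)
    have h1 : Cnorm r (f - g) ≤ Cnorm r f + Cnorm r g :=
      ih (hf.of_le (by exact_mod_cast Nat.le_succ r)) (hg.of_le (by exact_mod_cast Nat.le_succ r))
    have h2 : ∑ i : Fin m, Cnorm r (pd i (f - g)) ≤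
        ∑ i : Fin m, Cnorm r (pd i f) + ∑ i : Fin m, Cnorm r (pd i g) := by
      rw [← Finset.sum_add_distrib]
      exact Finset.sum_le_sum fun i _ => key i
    show Cnorm r (f-g) + ∑ i : Fin m, Cnorm r (pd i (f - g)) ≤
      (Cnorm r f + ∑ i : Fin m, Cnorm r (pd i f)) + (Cnorm r g + ∑ i : Fin m, Cnorm r (pd i g))
    linarith

/-- moving from `x` into the cube along coordinate `i` stays in the cube -/
lemma cube_line_mem {m : ℕ} {x : Fin m → ℝ} (hx : x ∈ cube m) (i : Fin m) (σ : ℝ)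
    (hσ : (x i ≤ 0 ∧ σ = 1) ∨ (0 < x i ∧ σ = -1)) {t : ℝ} (ht : t ∈ Set.Icc (0:ℝ) 1) :
    x + (σ * t) • (Pi.single i 1 : Fin m → ℝ) ∈ cube m := by
  simp only [cube, Set.mem_Icc, Pi.le_def] at hx ⊢
  obtain ⟨hx1, hx2⟩ := hx
  obtain ⟨ht0, ht1⟩ := ht
  constructor <;> intro j <;>
  · have h1 := hx1 j
    have h2 := hx2 j
    simp only [Pi.add_apply, Pi.smul_apply, smul_eq_mul, Pi.single_apply]
    rcases eq_or_ne j i with rfl | hne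
    · simp only [if_pos rfl, mul_one]
      rcases hσ with ⟨hxi, rfl⟩ | ⟨hxi, rfl⟩ <;> norm_num <;> nlinarith
    · simp only [if_neg hne, mul_zero, add_zero]
      linarith

/-- The interpolation function. -/
def phi (B ε : ℝ) : ℝ := (2 + B) * max ε (Real.sqrt ε)

lemma phi_pos {B ε : ℝ} (hB : 0 ≤ B) (hε : 0 < ε) : 0 < phi B ε :=
  mul_pos (by linarith) (lt_max_of_lt_left hε)

lemma phi_tendsto {B : ℝ} :
    Filter.Tendsto (phi B) (nhdsWithin 0 (Set.Ioi 0)) (nhds 0) := by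
  have hc : Continuous (phi B) :=
    continuous_const.mul (continuous_id.max Real.continuous_sqrt)
  have : phi B 0 = 0 := by simp [phi]
  exact (hc.tendsto' 0 0 this).mono_left nhdsWithin_le_nhds

/-- Landau-type estimate: bound on the first derivative from bounds on the
function and the second derivative. -/
lemma landau {m : ℕ} {U : Set (Fin m → ℝ)} (hU : IsOpen U) (hc : cube m ⊆ U)
    {u : (Fin m → ℝ) → ℝ} (hu : ContDiffOn ℝ 2 u U) (i : Fin m) {ε B : ℝ}
    (hε : 0 < ε) (hB : 0 ≤ B)
    (h0 : ∀ x ∈ cube m, |u x| ≤ ε) (h2 : ∀ x ∈ cube m, |pd i (pd i u) x| ≤ B) :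
    ∀ x ∈ cube m, |pd i u x| ≤ phi B ε := by
  intro x hx
  set h : ℝ := min 1 (Real.sqrt ε) with hdef
  have hs : 0 < Real.sqrt ε := Real.sqrt_pos.2 hε
  have hh0 : 0 < h := lt_min one_pos hs
  have hh1 : h ≤ 1 := min_le_left _ _
  -- choose the direction
  set σ : ℝ := if x i ≤ 0 then 1 else -1 with hσdef
  have hσ : (x i ≤ 0 ∧ σ = 1) ∨ (0 < x i ∧ σ = -1) := by
    by_cases hxi : x i ≤ 0
    · exact Or.inl ⟨hxi, if_pos hxi⟩
    · exact Or.inr ⟨lt_of_not_ge hxi, if_neg hxi⟩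
  have hσ1 : |σ| = 1 := by rcases hσ with ⟨-, hs1⟩ | ⟨-, hs1⟩ <;> rw [hs1] <;> norm_num
  set v : Fin m → ℝ := Pi.single i 1 with hvdef
  set c : ℝ → (Fin m → ℝ) := fun t => x + (σ * t) • v with hcdef
  have hmem : ∀ t ∈ Set.Icc (0:ℝ) 1, c t ∈ cube m := fun t ht =>
    cube_line_mem hx i σ hσ ht
  have hmemU : ∀ t ∈ Set.Icc (0:ℝ) 1, c t ∈ U := fun t ht => hc (hmem t ht)
  -- the curve has constant derivative σ • v
  have hcurve : ∀ t : ℝ, HasDerivAt c (σ • v) t := by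
    intro t
    have h1 : HasDerivAt (fun s : ℝ => σ * s) σ t := by
      simpa using (hasDerivAt_id t).const_mul σ
    have h2 : HasDerivAt (fun s : ℝ => (σ * s) • v) (σ • v) t := h1.smul_const v
    exact h2.const_add x
  -- differentiability facts
  have hud : ∀ y ∈ U, DifferentiableAt ℝ u y := fun y hy =>
    ((hu.differentiableOn (by norm_num)) y hy).differentiableAt (hU.mem_nhds hy)
  have hpdd : ∀ y ∈ U, DifferentiableAt ℝ (pd i u) y := by
    intro y hy
    have : ContDiffOn ℝ 1 (pd i u) U := by
      have := pd_contDiffOn hU (r := 1) (by exact_mod_cast hu) i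
      exact this
    exact ((this.differentiableOn (by norm_num)) y hy).differentiableAt (hU.mem_nhds hy)
  -- g and its derivative
  set g : ℝ → ℝ := fun t => u (c t) with hgdef
  have hg : ∀ t ∈ Set.Icc (0:ℝ) 1, HasDerivAt g (σ * pd i u (c t)) t := by
    intro t ht
    have h1 : HasDerivAt g (fderiv ℝ u (c t) (σ • v)) t :=
      (hud (c t) (hmemU t ht)).hasFDerivAt.comp_hasDerivAt t (hcurve t)
    simpa [pd, map_smul, smul_eq_mul] using h1
  set w : ℝ → ℝ := fun t => pd i u (c t) with hwdef
  have hw : ∀ t ∈ Set.Icc (0:ℝ) 1, HasDerivAt w (σ * pd i (pd i u) (c t)) t := by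
    intro t ht
    have h1 : HasDerivAt w (fderiv ℝ (pd i u) (c t) (σ • v)) t :=
      (hpdd (c t) (hmemU t ht)).hasFDerivAt.comp_hasDerivAt t (hcurve t)
    simpa [pd, map_smul, smul_eq_mul] using h1
  -- mean value theorem for g on [0, h]
  have hIcc : Set.Icc (0:ℝ) h ⊆ Set.Icc (0:ℝ) 1 := Set.Icc_subset_Icc le_rfl hh1
  have hgc : ContinuousOn g (Set.Icc (0:ℝ) h) := fun t ht =>
    ((hg t (hIcc ht)).continuousAt).continuousWithinAt
  obtain ⟨t0, ht0, hslope⟩ :=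
    exists_hasDerivAt_eq_slope g (fun t => σ * pd i u (c t)) hh0 hgc
      (fun t ht => hg t (hIcc (Set.mem_Icc_of_Ioo ht)))
  have ht0' : t0 ∈ Set.Icc (0:ℝ) 1 := hIcc (Set.mem_Icc_of_Ioo ht0)
  -- Lipschitz bound on w
  have hlip : |w t0 - w 0| ≤ B * t0 := by
    have := Convex.norm_image_sub_le_of_norm_hasDerivWithin_le
      (f := w) (f' := fun t => σ * pd i (pd i u) (c t)) (s := Set.Icc (0:ℝ) 1)
      (fun t ht => (hw t ht).hasDerivWithinAt)
      (fun t ht => by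
        rw [Real.norm_eq_abs, abs_mul, hσ1, one_mul]
        exact h2 (c t) (hmem t ht))
      (convex_Icc 0 1) (Set.left_mem_Icc.2 zero_le_one) ht0'
    simpa [Real.norm_eq_abs, abs_of_nonneg ht0.1.le] using this
  -- combine
  have hc0 : c 0 = x := by simp [hcdef]
  have hw0 : w 0 = pd i u x := by rw [hwdef]; simp [hc0]
  have hg0 : |g 0| ≤ ε := h0 (c 0) (hmem 0 (Set.left_mem_Icc.2 zero_le_one))
  have hgh : |g h| ≤ ε := h0 (c h) (hmem h ⟨hh0.le, hh1⟩)
  have hslope' : |w t0| ≤ 2 * ε / h := by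
    have habs : |σ * pd i u (c t0)| = |w t0| := by rw [abs_mul, hσ1, one_mul]
    rw [← habs, hslope, sub_zero, abs_div, abs_of_pos hh0]
    have hnum : |g h - g 0| ≤ 2 * ε := by
      calc |g h - g 0| ≤ |g h| + |g 0| := abs_sub _ _
        _ ≤ 2 * ε := by linarith
    gcongr
  have hmain : |pd i u x| ≤ 2 * ε / h + B * h := by
    rw [← hw0]
    have t1 : |w 0| - |w t0| ≤ |w 0 - w t0| := abs_sub_abs_le_abs_sub _ _
    have t2 : |w 0 - w t0| = |w t0 - w 0| := abs_sub_comm _ _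
    have t3 : B * t0 ≤ B * h := by
      apply mul_le_mul_of_nonneg_left ht0.2.le hB
    linarith
  refine hmain.trans ?_
  rcases le_or_gt ε 1 with hle | hlt
  · have h1 : Real.sqrt ε ≤ 1 := by
      rw [show (1:ℝ) = Real.sqrt 1 by simp]
      exact Real.sqrt_le_sqrt hle
    have hh : h = Real.sqrt ε := min_eq_right h1
    have hsq : Real.sqrt ε * Real.sqrt ε = ε := Real.mul_self_sqrt hε.le
    have hmax : max ε (Real.sqrt ε) = Real.sqrt ε := max_eq_right (by nlinarith)
    rw [hh, mul_div_assoc, Real.div_sqrt]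
    simp only [phi, hmax]
    exact le_of_eq (by ring)
  · have h1 : (1:ℝ) ≤ Real.sqrt ε := by
      rw [show (1:ℝ) = Real.sqrt 1 by simp]
      exact Real.sqrt_le_sqrt hlt.le
    have hh : h = 1 := min_eq_left h1
    have hsq : Real.sqrt ε * Real.sqrt ε = ε := Real.mul_self_sqrt hε.le
    have hmax : max ε (Real.sqrt ε) = ε := max_eq_left (by nlinarith)
    rw [hh]
    simp only [phi, hmax]
    nlinarith

lemma lemA (m : ℕ) (k : ℕ) :
    ∃ δ : ℝ → ℝ → ℝ,
      (∀ B ε : ℝ, 0 < B → 0 < ε → 0 < δ B ε) ∧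
      (∀ B : ℝ, 0 < B → Filter.Tendsto (δ B) (nhdsWithin 0 (Set.Ioi 0)) (nhds 0)) ∧
      (∀ B ε : ℝ, 0 < B → 0 < ε → ∀ (u : (Fin m → ℝ) → ℝ) (U : Set (Fin m → ℝ)),
        IsOpen U → cube m ⊆ U → ContDiffOn ℝ (k + 1) u U →
        Cnorm (k + 1) u ≤ B → Cnorm 0 u ≤ ε → Cnorm k u ≤ δ B ε) := by
  induction k with
  | zero =>
    refine ⟨fun _ ε => ε, fun _ _ _ h => h, fun _ _ => Filter.tendsto_id.mono_right nhdsWithin_le_nhds,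
      fun B ε hB hε u U hU hc hu h1 h0 => h0⟩
  | succ k ih =>
    obtain ⟨δ, hδpos, hδt, hδ⟩ := ih
    refine ⟨fun B ε => δ B ε + m * δ B (phi B ε), ?_, ?_, ?_⟩
    · intro B ε hB hε
      have h1 := hδpos B ε hB hε
      have h2 := hδpos B (phi B ε) hB (phi_pos hB.le hε)
      have : (0:ℝ) ≤ m * δ B (phi B ε) := by positivity
      show (0:ℝ) < δ B ε + m * δ B (phi B ε)
      linarith
    · intro B hB
      have hφ : Filter.Tendsto (phi B) (nhdsWithin 0 (Set.Ioi 0))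
          (nhdsWithin 0 (Set.Ioi 0)) := by
        rw [tendsto_nhdsWithin_iff]
        refine ⟨phi_tendsto, ?_⟩
        filter_upwards [self_mem_nhdsWithin] with ε hε
        exact phi_pos hB.le hε
      have hcomp : Filter.Tendsto (fun ε => δ B (phi B ε)) (nhdsWithin 0 (Set.Ioi 0))
          (nhds 0) := (hδt B hB).comp hφ
      have := (hδt B hB).add (hcomp.const_mul (m:ℝ))
      simpa using this
    · intro B ε hB hε u U hU hc hu h1 h0
      have hk2 : (k:ℕ∞) + 1 ≤ (k:ℕ∞) + 1 + 1 := by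
        exact_mod_cast Nat.le_succ (k+1)
      -- bound Cnorm k u
      have hu1 : ContDiffOn ℝ (k + 1) u U := hu.of_le (by exact_mod_cast Nat.le_succ (k+1))
      have hb1 : Cnorm (k + 1) u ≤ B := (Cnorm_le_succ (k+1) u).trans h1
      have main1 : Cnorm k u ≤ δ B ε := hδ B ε hB hε u U hU hc hu1 hb1 h0
      -- bound each Cnorm k (pd i u)
      have main2 : ∀ i : Fin m, Cnorm k (pd i u) ≤ δ B (phi B ε) := by
        intro i
        have hpdsmooth : ContDiffOn ℝ (k + 1) (pd i u) U := by
          have := pd_contDiffOn hU (r := k + 1) hu i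
          exact this
        -- Cnorm (k+1) (pd i u) ≤ B
        have hble : Cnorm (k+1) (pd i u) ≤ Cnorm (k+2) u := by
          have : Cnorm (k+1) (pd i u) ≤ ∑ j : Fin m, Cnorm (k+1) (pd j u) :=
            Finset.single_le_sum (f := fun j => Cnorm (k+1) (pd j u))
              (fun j _ => Cnorm_nonneg _ _) (Finset.mem_univ i)
          have h' : Cnorm (k+2) u = Cnorm (k+1) u + ∑ j : Fin m, Cnorm (k+1) (pd j u) := rfl
          have := this.trans (le_add_of_nonneg_left (Cnorm_nonneg (k+1) u))
          rw [← h'] at this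
          exact this
        have hb2 : Cnorm (k+1) (pd i u) ≤ B := hble.trans h1
        -- second derivative bound
        have hdd : ∀ x ∈ cube m, |pd i (pd i u) x| ≤ B := by
          intro x hx
          have hcont : ContinuousOn (pd i (pd i u)) (cube m) := by
            have h2s : ContDiffOn ℝ k (pd i (pd i u)) U :=
              pd_contDiffOn hU (r := k) hpdsmooth i
            exact h2s.continuousOn.mono hc
          have e1 : |pd i (pd i u) x| ≤ Cnorm 0 (pd i (pd i u)) := abs_le_Cnorm0 hcont hx
          have e2 : Cnorm 0 (pd i (pd i u)) ≤ Cnorm k (pd i (pd i u)) := Cnorm_zero_le _ _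
          have e3 : Cnorm k (pd i (pd i u)) ≤ ∑ j : Fin m, Cnorm k (pd j (pd i u)) :=
            Finset.single_le_sum (f := fun j => Cnorm k (pd j (pd i u)))
              (fun j _ => Cnorm_nonneg _ _) (Finset.mem_univ i)
          have e4 : (Cnorm (k+1) (pd i u) : ℝ) =
              Cnorm k (pd i u) + ∑ j : Fin m, Cnorm k (pd j (pd i u)) := rfl
          have e5 : ∑ j : Fin m, Cnorm k (pd j (pd i u)) ≤ Cnorm (k+1) (pd i u) := by
            rw [e4]; exact le_add_of_nonneg_left (Cnorm_nonneg _ _)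
          linarith [hb2]
        -- C0 bound from landau
        have hu2 : ContDiffOn ℝ 2 u U := hu.of_le (by exact_mod_cast Nat.le_add_left 2 k)
        have h0pt : ∀ x ∈ cube m, |u x| ≤ ε := fun x hx =>
          (abs_le_Cnorm0 (hu.continuousOn.mono hc) hx).trans h0
        have hC0 : Cnorm 0 (pd i u) ≤ phi B ε := by
          refine Cnorm0_le (phi_pos hB.le hε).le ?_
          exact landau hU hc hu2 i hε hB.le h0pt hdd
        exact hδ B (phi B ε) hB (phi_pos hB.le hε) (pd i u) U hU hc hpdsmooth hb2 hC0
      have hsum : ∑ i : Fin m, Cnorm k (pd i u) ≤ m * δ B (phi B ε) := by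
        calc ∑ i : Fin m, Cnorm k (pd i u) ≤ ∑ _i : Fin m, δ B (phi B ε) :=
              Finset.sum_le_sum fun i _ => main2 i
          _ = m * δ B (phi B ε) := by simp [mul_comm]
      show Cnorm k u + ∑ i : Fin m, Cnorm k (pd i u) ≤ δ B ε + m * δ B (phi B ε)
      linarith

/-- Effective Arzelà–Ascoli: for integers `k ≥ 0`, `m ≥ 1` there is `γ = γ_{k,m}(M,ε) > 0`
with `γ_{k,m}(M,ε) → 0` as `ε → 0⁺` (for each fixed `M`), such that any two `C^{k+1}`
functions `f, g` on `[-1,1]^m` with `‖f‖_{C^{k+1}} ≤ M`, `‖g‖_{C^{k+1}} ≤ M` and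
`‖f - g‖_{C^0} ≤ ε` satisfy `‖f - g‖_{C^k} ≤ γ`. -/
theorem c0_close_ck_bounded_implies_ck_close (k m : ℕ) (hm : 1 ≤ m) :
    ∃ γ : ℝ → ℝ → ℝ,
      (∀ M ε : ℝ, 0 < M → 0 < ε → 0 < γ M ε) ∧
      (∀ M : ℝ, 0 < M →
        Filter.Tendsto (γ M) (nhdsWithin 0 (Set.Ioi 0)) (nhds 0)) ∧
      (∀ M ε : ℝ, 0 < M → 0 < ε → ∀ f g : (Fin m → ℝ) → ℝ,
        (∃ U, IsOpen U ∧ cube m ⊆ U ∧ ContDiffOn ℝ (k + 1) f U) →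
        (∃ U, IsOpen U ∧ cube m ⊆ U ∧ ContDiffOn ℝ (k + 1) g U) →
        Cnorm (k + 1) f ≤ M → Cnorm (k + 1) g ≤ M → Cnorm 0 (f - g) ≤ ε →
        Cnorm k (f - g) ≤ γ M ε) := by
  obtain ⟨δ, hpos, ht, hb⟩ := lemA m k
  refine ⟨fun M ε => δ (2 * M) ε, ?_, ?_, ?_⟩
  · intro M ε hM hε
    exact hpos (2 * M) ε (by linarith) hε
  · intro M hM
    exact ht (2 * M) (by linarith)
  · rintro M ε hM hε f g ⟨U, hU, hcU, hf⟩ ⟨V, hV, hcV, hg⟩ hfM hgM h0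
    set W := U ∩ V with hW
    have hWopen : IsOpen W := hU.inter hV
    have hcW : cube m ⊆ W := Set.subset_inter hcU hcV
    have hf' : ContDiffOn ℝ (k + 1) f W := hf.mono Set.inter_subset_left
    have hg' : ContDiffOn ℝ (k + 1) g W := hg.mono Set.inter_subset_right
    have hfg : ContDiffOn ℝ (k + 1) (f - g) W := hf'.sub hg'
    have hcast : ((k + 1 : ℕ) : ℕ∞) = (k : ℕ∞) + 1 := by push_cast; rfl
    have hsub : Cnorm (k + 1) (f - g) ≤ 2 * M := by
      have := Cnorm_sub_le (k + 1) hWopen hcW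
        (by exact_mod_cast hf') (by exact_mod_cast hg')
      linarith
    exact hb (2 * M) ε (by linarith) hε (f - g) W hWopen hcW hfg hsub h0

end
end

section
/- Let m ≥ 1 be an integer and let M, ε be reals with 0 < ε ≤ M. Suppose f, g : [−1,1]^m → ℝ are C^2 functions such that all partial derivatives of f and of g of order at most 2 are bounded in absolute value by M on the cube, and sup_{x∈[−1,1]^m} |f(x)−g(x)| ≤ ε. Then for each 1 ≤ i ≤ m, sup_{x∈[−1,1]^m} |∂_i f(x) − ∂_i g(x)| ≤ 4√(Mε). -/
noncomputable section

lemma abs_sub' (a b : ℝ) : |a - b| ≤ |a| + |b| := by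
  calc |a - b| ≤ |a| + |-b| := by rw [sub_eq_add_neg]; exact abs_add_le _ _
    _ = |a| + |b| := by rw [abs_neg]

lemma hasDerivAt_line {m : ℕ} (i : Fin m) (v : (Fin m → ℝ) → ℝ) (x : Fin m → ℝ) (t : ℝ)
    (hv : DifferentiableAt ℝ v (x + t • (Pi.single i 1 : Fin m → ℝ))) :
    HasDerivAt (fun s : ℝ => v (x + s • (Pi.single i 1 : Fin m → ℝ)))
      (pd i v (x + t • (Pi.single i 1 : Fin m → ℝ))) t := by
  have hℓ : HasDerivAt (fun s : ℝ => x + s • (Pi.single i 1 : Fin m → ℝ))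
      (Pi.single i 1 : Fin m → ℝ) t := by
    simpa using ((hasDerivAt_id t).smul_const (Pi.single i 1 : Fin m → ℝ)).const_add x
  have := hv.hasFDerivAt.comp_hasDerivAt t hℓ
  exact this

lemma contDiffOn_pd {m : ℕ} (i : Fin m) (u : (Fin m → ℝ) → ℝ) (W : Set (Fin m → ℝ))
    (hW : IsOpen W) (hu : ContDiffOn ℝ 2 u W) : ContDiffOn ℝ 1 (pd i u) W := by
  have h : ContDiffOn ℝ 1 (fderiv ℝ u) W := hu.fderiv_of_isOpen hW (by norm_num)
  exact (ContinuousLinearMap.apply ℝ ℝ (Pi.single i 1 : Fin m → ℝ)).contDiff.comp_contDiffOn h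

/-- If `f, g` are `C^2` on the cube `[-1,1]^m` with all partial derivatives of order at
most `2` bounded by `M`, and `|f - g| ≤ ε` on the cube with `0 < ε ≤ M`, then
`|∂_i f − ∂_i g| ≤ 4√(Mε)` on the cube for each `i`. -/
theorem first_derivs_close_of_c0_close (m : ℕ) (hm : 1 ≤ m) (M ε : ℝ)
    (hε : 0 < ε) (hεM : ε ≤ M)
    (f g : (Fin m → ℝ) → ℝ)
    (hf : ∃ U, IsOpen U ∧ cube m ⊆ U ∧ ContDiffOn ℝ 2 f U)
    (hg : ∃ U, IsOpen U ∧ cube m ⊆ U ∧ ContDiffOn ℝ 2 g U)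
    (hfb : ∀ x ∈ cube m, |f x| ≤ M ∧ (∀ i, |pd i f x| ≤ M) ∧
      ∀ i j, |pd j (pd i f) x| ≤ M)
    (hgb : ∀ x ∈ cube m, |g x| ≤ M ∧ (∀ i, |pd i g x| ≤ M) ∧
      ∀ i j, |pd j (pd i g) x| ≤ M)
    (hclose : ∀ x ∈ cube m, |f x - g x| ≤ ε) :
    ∀ i : Fin m, ∀ x ∈ cube m, |pd i f x - pd i g x| ≤ 4 * Real.sqrt (M * ε) := by
  obtain ⟨U, hUo, hUs, hfC⟩ := hf
  obtain ⟨V, hVo, hVs, hgC⟩ := hg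
  have hM : 0 < M := hε.trans_le hεM
  intro i x hx
  set L : ℝ := Real.sqrt (ε / M) with hLdef
  have hLpos : 0 < L := Real.sqrt_pos.mpr (div_pos hε hM)
  have hLle : L ≤ 1 := by
    rw [hLdef, show (1:ℝ) = Real.sqrt 1 by simp]
    exact Real.sqrt_le_sqrt ((div_le_one hM).mpr hεM)
  have hLsq : L * L = ε / M := Real.mul_self_sqrt (le_of_lt (div_pos hε hM))
  set lam : ℝ := if x i ≤ 0 then L else -L with hlamdef
  set s : Set ℝ := Set.uIcc 0 lam with hsdef
  set e : Fin m → ℝ := Pi.single i 1 with hedef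
  set ℓ : ℝ → (Fin m → ℝ) := fun t => x + t • e with hℓdef
  have hℓ0 : ℓ 0 = x := by simp [hℓdef]
  have hlamabs : |lam| = L := by rw [hlamdef]; split <;> simp [abs_of_pos hLpos]
  have hlamL : -L ≤ lam ∧ lam ≤ L := abs_le.mp (le_of_eq hlamabs)
  have habs : ∀ t ∈ s, |t| ≤ L := by
    intro t ht
    rcases Set.mem_uIcc.mp ht with h | h <;> rw [abs_le] <;>
      exact ⟨by linarith [hlamL.1], by linarith [hlamL.2]⟩
  have hmem : ∀ t ∈ s, ℓ t ∈ cube m := by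
    intro t ht
    have hxc := hx
    rw [cube, Set.mem_Icc] at hxc ⊢
    obtain ⟨hx1, hx2⟩ := hxc
    constructor <;> intro j <;>
      simp only [hℓdef, Pi.add_apply, Pi.smul_apply, smul_eq_mul] <;>
      by_cases hji : j = i
    · subst hji
      have h1 : (-1:ℝ) ≤ x j := hx1 j
      simp only [hedef, Pi.single_eq_same, mul_one]
      by_cases hxi : x j ≤ 0
      · have hlam : lam = L := by rw [hlamdef, if_pos hxi]
        have ht' : t ∈ Set.Icc 0 L := by
          rw [hsdef, hlam, Set.uIcc_of_le hLpos.le] at ht; exact ht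
        have := ht'.1
        show (-1:ℝ) ≤ x j + t
        linarith
      · push_neg at hxi
        have hlam : lam = -L := by rw [hlamdef, if_neg (not_le.mpr hxi)]
        have ht' : t ∈ Set.Icc (-L) 0 := by
          rw [hsdef, hlam, Set.uIcc_of_ge (by linarith : -L ≤ 0)] at ht; exact ht
        have := ht'.1
        show (-1:ℝ) ≤ x j + t
        linarith
    · simp only [hedef, Pi.single_eq_of_ne hji, mul_zero, add_zero]
      exact hx1 j
    · subst hji
      have h2 : x j ≤ (1:ℝ) := hx2 j
      simp only [hedef, Pi.single_eq_same, mul_one]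
      by_cases hxi : x j ≤ 0
      · have hlam : lam = L := by rw [hlamdef, if_pos hxi]
        have ht' : t ∈ Set.Icc 0 L := by
          rw [hsdef, hlam, Set.uIcc_of_le hLpos.le] at ht; exact ht
        have := ht'.2
        show x j + t ≤ (1:ℝ)
        linarith
      · push_neg at hxi
        have hlam : lam = -L := by rw [hlamdef, if_neg (not_le.mpr hxi)]
        have ht' : t ∈ Set.Icc (-L) 0 := by
          rw [hsdef, hlam, Set.uIcc_of_ge (by linarith : -L ≤ 0)] at ht; exact ht
        have := ht'.2
        show x j + t ≤ (1:ℝ)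
        linarith
    · simp only [hedef, Pi.single_eq_of_ne hji, mul_zero, add_zero]
      exact hx2 j
  have h0s : (0:ℝ) ∈ s := Set.left_mem_uIcc
  have hlams : lam ∈ s := Set.right_mem_uIcc
  have hfd1 : ContDiffOn ℝ 1 (pd i f) U := contDiffOn_pd i f U hUo hfC
  have hgd1 : ContDiffOn ℝ 1 (pd i g) V := contDiffOn_pd i g V hVo hgC
  have hfdiff : ∀ y ∈ cube m, DifferentiableAt ℝ f y := fun y hy =>
    (hfC.contDiffAt (hUo.mem_nhds (hUs hy))).differentiableAt (by norm_num)
  have hgdiff : ∀ y ∈ cube m, DifferentiableAt ℝ g y := fun y hy =>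
    (hgC.contDiffAt (hVo.mem_nhds (hVs hy))).differentiableAt (by norm_num)
  have hfd1diff : ∀ y ∈ cube m, DifferentiableAt ℝ (pd i f) y := fun y hy =>
    (hfd1.contDiffAt (hUo.mem_nhds (hUs hy))).differentiableAt (by norm_num)
  have hgd1diff : ∀ y ∈ cube m, DifferentiableAt ℝ (pd i g) y := fun y hy =>
    (hgd1.contDiffAt (hVo.mem_nhds (hVs hy))).differentiableAt (by norm_num)
  have claim1f : ∀ t ∈ s, |pd i f (ℓ t) - pd i f x| ≤ M * L := by
    intro t ht
    have hD : ∀ u ∈ s, HasDerivWithinAt (fun r => pd i f (ℓ r)) (pd i (pd i f) (ℓ u)) s u :=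
      fun u hu => (hasDerivAt_line i (pd i f) x u (hfd1diff _ (hmem u hu))).hasDerivWithinAt
    have hB : ∀ u ∈ s, ‖pd i (pd i f) (ℓ u)‖ ≤ M := fun u hu =>
      (hfb _ (hmem u hu)).2.2 i i
    have h := Convex.norm_image_sub_le_of_norm_hasDerivWithin_le hD hB (convex_uIcc 0 lam) h0s ht
    rw [hℓ0] at h
    calc |pd i f (ℓ t) - pd i f x| ≤ M * ‖t - 0‖ := h
      _ = M * |t| := by rw [sub_zero, Real.norm_eq_abs]
      _ ≤ M * L := by nlinarith [habs t ht, abs_nonneg t]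
  have claim1g : ∀ t ∈ s, |pd i g (ℓ t) - pd i g x| ≤ M * L := by
    intro t ht
    have hD : ∀ u ∈ s, HasDerivWithinAt (fun r => pd i g (ℓ r)) (pd i (pd i g) (ℓ u)) s u :=
      fun u hu => (hasDerivAt_line i (pd i g) x u (hgd1diff _ (hmem u hu))).hasDerivWithinAt
    have hB : ∀ u ∈ s, ‖pd i (pd i g) (ℓ u)‖ ≤ M := fun u hu =>
      (hgb _ (hmem u hu)).2.2 i i
    have h := Convex.norm_image_sub_le_of_norm_hasDerivWithin_le hD hB (convex_uIcc 0 lam) h0s ht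
    rw [hℓ0] at h
    calc |pd i g (ℓ t) - pd i g x| ≤ M * ‖t - 0‖ := h
      _ = M * |t| := by rw [sub_zero, Real.norm_eq_abs]
      _ ≤ M * L := by nlinarith [habs t ht, abs_nonneg t]
  set A : ℝ := pd i f x - pd i g x with hAdef
  have claim2 : |(f (ℓ lam) - g (ℓ lam)) - (f x - g x) - lam * A| ≤ 2 * M * L * L := by
    have hD : ∀ u ∈ s, HasDerivWithinAt
        (fun r => (f (ℓ r) - g (ℓ r)) - r * A)
        ((pd i f (ℓ u) - pd i g (ℓ u)) - A) s u := by
      intro u hu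
      have h1 := hasDerivAt_line i f x u (hfdiff _ (hmem u hu))
      have h2 := hasDerivAt_line i g x u (hgdiff _ (hmem u hu))
      have h3 : HasDerivAt (fun r : ℝ => r * A) A u := by
        simpa using (hasDerivAt_id u).mul_const A
      exact ((h1.sub h2).sub h3).hasDerivWithinAt
    have hB : ∀ u ∈ s, ‖(pd i f (ℓ u) - pd i g (ℓ u)) - A‖ ≤ 2 * M * L := by
      intro u hu
      have h1 := claim1f u hu
      have h2 := claim1g u hu
      have heq : (pd i f (ℓ u) - pd i g (ℓ u)) - A
          = (pd i f (ℓ u) - pd i f x) - (pd i g (ℓ u) - pd i g x) := by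
        rw [hAdef]; ring
      rw [Real.norm_eq_abs, heq]
      calc |(pd i f (ℓ u) - pd i f x) - (pd i g (ℓ u) - pd i g x)|
          ≤ |pd i f (ℓ u) - pd i f x| + |pd i g (ℓ u) - pd i g x| := abs_sub' _ _
        _ ≤ M * L + M * L := add_le_add h1 h2
        _ = 2 * M * L := by ring
    have h := Convex.norm_image_sub_le_of_norm_hasDerivWithin_le hD hB (convex_uIcc 0 lam)
      h0s hlams
    rw [hℓ0] at h
    have hn : ‖lam - 0‖ ≤ L := by rw [sub_zero, Real.norm_eq_abs, hlamabs]
    have key : |(f (ℓ lam) - g (ℓ lam)) - lam * A - ((f x - g x) - 0 * A)|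
        ≤ 2 * M * L * ‖lam - 0‖ := h
    have e1 : (f (ℓ lam) - g (ℓ lam)) - (f x - g x) - lam * A
        = (f (ℓ lam) - g (ℓ lam)) - lam * A - ((f x - g x) - 0 * A) := by ring
    rw [e1]
    calc |(f (ℓ lam) - g (ℓ lam)) - lam * A - ((f x - g x) - 0 * A)|
        ≤ 2 * M * L * ‖lam - 0‖ := key
      _ ≤ 2 * M * L * L := mul_le_mul_of_nonneg_left hn (by positivity)
  -- conclude
  have hML : M * (L * L) = ε := by rw [hLsq]; field_simp
  have h1 : |f (ℓ lam) - g (ℓ lam)| ≤ ε := hclose _ (hmem lam hlams)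
  have h2 : |f x - g x| ≤ ε := hclose x hx
  have hlamA : L * |A| ≤ 4 * ε := by
    have e1 : lam * A = ((f (ℓ lam) - g (ℓ lam)) - (f x - g x))
        - ((f (ℓ lam) - g (ℓ lam)) - (f x - g x) - lam * A) := by ring
    have t1 : |lam * A| ≤ |(f (ℓ lam) - g (ℓ lam)) - (f x - g x)|
        + |(f (ℓ lam) - g (ℓ lam)) - (f x - g x) - lam * A| := by
      have := abs_sub' ((f (ℓ lam) - g (ℓ lam)) - (f x - g x))
        ((f (ℓ lam) - g (ℓ lam)) - (f x - g x) - lam * A)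
      rw [show (f (ℓ lam) - g (ℓ lam)) - (f x - g x)
        - ((f (ℓ lam) - g (ℓ lam)) - (f x - g x) - lam * A) = lam * A by ring] at this
      exact this
    have t2 : |(f (ℓ lam) - g (ℓ lam)) - (f x - g x)|
        ≤ |f (ℓ lam) - g (ℓ lam)| + |f x - g x| := abs_sub' _ _
    have t3 : |lam * A| = L * |A| := by rw [abs_mul, hlamabs]
    nlinarith [claim2]
  have key : L * Real.sqrt (M * ε) = ε := by
    rw [hLdef, ← Real.sqrt_mul (le_of_lt (div_pos hε hM))]
    rw [show ε / M * (M * ε) = ε ^ 2 by field_simp]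
    exact Real.sqrt_sq hε.le
  have final : L * |A| ≤ L * (4 * Real.sqrt (M * ε)) := by
    rw [show L * (4 * Real.sqrt (M * ε)) = 4 * (L * Real.sqrt (M * ε)) by ring, key]
    exact hlamA
  exact le_of_mul_le_mul_left final hLpos

end
end

section
/- (Chain rule for rel-C^r maps.) Let 0 ≤ r ≤ ∞, let V, V', V'' be finite dimensional real normed vector spaces and S, S', S'' topological spaces. Suppose Φ : U → V' × S' is a rel-C^r map defined on an open subset U ⊆ V × S, and Φ' : U' → V'' × S'' is a rel-C^r map defined on an open subset U' ⊆ V' × S', with Φ(U) ⊆ U'. Then the composition Φ' ∘ Φ : U → V'' × S'' is again a rel-C^r map. -/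
/-- A map `F : V × S → W` is rel-`C^r` (with respect to the projection to `S`) on an open
set `U ⊆ V × S` if `F` is continuous on `U` and, for every `j ≤ r`, each slice
`x ↦ F(x,s)` is `j`-times continuously differentiable on the slice of `U`, and the
`j`-th derivative in the `V`-directions `(x,s) ↦ D_x^j F(x,s)` is jointly continuous
on `U`. -/
def RelC (r : ℕ∞) {V W S : Type*} [NormedAddCommGroup V] [NormedSpace ℝ V]
    [NormedAddCommGroup W] [NormedSpace ℝ W] [TopologicalSpace S]
    (U : Set (V × S)) (F : V × S → W) : Prop :=
  ContinuousOn F U ∧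
  ∀ j : ℕ, (j : ℕ∞) ≤ r →
    (∀ s : S, ContDiffOn ℝ j (fun x => F (x, s)) {x | (x, s) ∈ U}) ∧
    ContinuousOn (fun p : V × S => iteratedFDeriv ℝ j (fun x => F (x, p.2)) p.1) U

/-- A relative morphism `Φ : U → V' × S'`, `Φ(x,s) = (F(x,s), φ(s))` with `φ` continuous,
is rel-`C^r` if its first component `F` satisfies the rel-`C^r` conditions on `U`. -/
def RelMor (r : ℕ∞) {V V' S S' : Type*} [NormedAddCommGroup V] [NormedSpace ℝ V]
    [NormedAddCommGroup V'] [NormedSpace ℝ V'] [TopologicalSpace S] [TopologicalSpace S']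
    (U : Set (V × S)) (F : V × S → V') (φ : S → S') : Prop :=
  Continuous φ ∧ RelC r U F

/-- A Taylor series coinciding with another one on `s` is also a Taylor series on `s`. -/
theorem RelCAux.congr_series {E F : Type*} [NormedAddCommGroup E] [NormedSpace ℝ E]
    [NormedAddCommGroup F] [NormedSpace ℝ F] {n : WithTop ℕ∞} {f : E → F}
    {p q : E → FormalMultilinearSeries ℝ E F} {s : Set E}
    (h : HasFTaylorSeriesUpToOn n f p s) (hpq : ∀ m : ℕ, ∀ x ∈ s, q x m = p x m) :
    HasFTaylorSeriesUpToOn n f q s := by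
  constructor
  · intro x hx
    rw [hpq 0 x hx]
    exact h.zero_eq x hx
  · intro m hm x hx
    rw [hpq (m + 1) x hx]
    exact (h.fderivWithin m hm x hx).congr (fun y hy => hpq m y hy) (hpq m x hx)
  · intro m hm
    exact (h.cont m hm).congr (fun x hx => hpq m x hx)

/-- On an open set, a `C^j` function has `ftaylorSeries` (built from global iterated
derivatives) as a Taylor series. -/
theorem RelCAux.hasFTaylorSeriesUpToOn_of_isOpen {E F : Type*} [NormedAddCommGroup E]
    [NormedSpace ℝ E] [NormedAddCommGroup F] [NormedSpace ℝ F] {j : ℕ} {f : E → F} {s : Set E}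
    (hs : IsOpen s) (h : ContDiffOn ℝ j f s) :
    HasFTaylorSeriesUpToOn j f (ftaylorSeries ℝ f) s := by
  refine RelCAux.congr_series (h.ftaylorSeriesWithin hs.uniqueDiffOn) (fun m x hx => ?_)
  exact (iteratedFDerivWithin_of_isOpen m hs hx).symm

/-- Chain rule for rel-`C^r` maps: the composition of a rel-`C^r` map
`Φ = (F, φ) : U → V' × S'` with a rel-`C^r` map `Φ' = (F', φ') : U' → V'' × S''`
satisfying `Φ(U) ⊆ U'` is again rel-`C^r`. -/
theorem relC_comp (r : ℕ∞)
    {V V' V'' S S' S'' : Type*}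
    [NormedAddCommGroup V] [NormedSpace ℝ V]
    [NormedAddCommGroup V'] [NormedSpace ℝ V']
    [NormedAddCommGroup V''] [NormedSpace ℝ V'']
    [TopologicalSpace S] [TopologicalSpace S'] [TopologicalSpace S'']
    (U : Set (V × S)) (hU : IsOpen U) (U' : Set (V' × S')) (hU' : IsOpen U')
    (F : V × S → V') (φ : S → S') (hΦ : RelMor r U F φ)
    (F' : V' × S' → V'') (φ' : S' → S'') (hΦ' : RelMor r U' F' φ')
    (hsub : ∀ p ∈ U, ((F p, φ p.2) : V' × S') ∈ U') :
    RelMor r U (fun p : V × S => F' (F p, φ p.2)) (φ' ∘ φ) := by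
  obtain ⟨hφ, hFc, hF⟩ := hΦ
  obtain ⟨hφ', hF'c, hF'⟩ := hΦ'
  -- the map `p ↦ (F p, φ p.2)` is continuous on `U` and maps `U` into `U'`
  have hmap : ContinuousOn (fun p : V × S => ((F p, φ p.2) : V' × S')) U :=
    hFc.prodMk ((hφ.comp continuous_snd).continuousOn)
  have hmapsto : Set.MapsTo (fun p : V × S => ((F p, φ p.2) : V' × S')) U U' := hsub
  refine ⟨hφ'.comp hφ, hF'c.comp hmap hmapsto, fun j hj => ?_⟩
  -- open slices
  have hslice : ∀ s : S, IsOpen {x : V | (x, s) ∈ U} := fun s =>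
    hU.preimage (Continuous.prodMk_left s)
  have hslice' : ∀ t : S', IsOpen {y : V' | (y, t) ∈ U'} := fun t =>
    hU'.preimage (Continuous.prodMk_left t)
  -- slice regularity of the composition
  have hCD : ∀ s : S, ContDiffOn ℝ j (fun x => F' (F (x, s), φ s)) {x : V | (x, s) ∈ U} := by
    intro s
    have h1 : ContDiffOn ℝ j (fun y => F' (y, φ s)) {y : V' | (y, φ s) ∈ U'} :=
      (hF' j hj).1 (φ s)
    have h2 : ContDiffOn ℝ j (fun x => F (x, s)) {x : V | (x, s) ∈ U} := (hF j hj).1 s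
    exact h1.comp h2 (fun x hx => hsub (x, s) hx)
  refine ⟨hCD, ?_⟩
  -- the Faà di Bruno expression for the `j`-th derivative of the composition
  set G : V × S → (V [×j]→L[ℝ] V'') := fun p =>
    ((ftaylorSeries ℝ (fun y => F' (y, φ p.2)) (F p)).taylorComp
      (ftaylorSeries ℝ (fun x => F (x, p.2)) p.1)) j with hG
  have hGcont : ContinuousOn G U := by
    rw [hG]
    simp only [FormalMultilinearSeries.taylorComp]
    apply continuousOn_finset_sum
    intro c _
    let B := c.compAlongOrderedFinpartitionL ℝ V V' V''
    have hcl : (c.length : ℕ∞) ≤ r :=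
      le_trans (by exact_mod_cast c.length_le) hj
    have hcp : ∀ m : Fin c.length, ((c.partSize m : ℕ) : ℕ∞) ≤ r := fun m =>
      le_trans (by exact_mod_cast c.partSize_le m) hj
    have h1 : ContinuousOn
        (fun p : V × S => iteratedFDeriv ℝ c.length (fun y => F' (y, φ p.2)) (F p)) U := by
      have := ((hF' c.length hcl).2).comp hmap hmapsto
      exact this
    have h2 : ContinuousOn (fun p : V × S =>
        (fun m : Fin c.length =>
          iteratedFDeriv ℝ (c.partSize m) (fun x => F (x, p.2)) p.1)) U := by
      apply continuousOn_pi.2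
      intro m
      exact (hF (c.partSize m) (hcp m)).2
    have hB : Continuous (fun z :
        (V' [×c.length]→L[ℝ] V'') × (∀ m : Fin c.length, V [×c.partSize m]→L[ℝ] V') =>
        B z.1 z.2) := by
      have := B.analyticOnNhd_uncurry_of_multilinear (s := Set.univ)
      exact continuousOn_univ.1 this.continuousOn
    exact (hB.comp_continuousOn (h1.prodMk h2))
  refine ContinuousOn.congr hGcont ?_
  -- equality of the `j`-th derivative with the Faà di Bruno expression
  rintro ⟨x, s⟩ hp
  have hg : HasFTaylorSeriesUpToOn j (fun y => F' (y, φ s))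
      (ftaylorSeries ℝ (fun y => F' (y, φ s))) {y : V' | (y, φ s) ∈ U'} :=
    RelCAux.hasFTaylorSeriesUpToOn_of_isOpen (hslice' (φ s)) ((hF' j hj).1 (φ s))
  have hf : HasFTaylorSeriesUpToOn j (fun x => F (x, s))
      (ftaylorSeries ℝ (fun x => F (x, s))) {x : V | (x, s) ∈ U} :=
    RelCAux.hasFTaylorSeriesUpToOn_of_isOpen (hslice s) ((hF j hj).1 s)
  have hm : Set.MapsTo (fun x => F (x, s)) {x : V | (x, s) ∈ U} {y : V' | (y, φ s) ∈ U'} :=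
    fun x hx => hsub (x, s) hx
  have hcomp := hg.comp hf hm
  have := hcomp.eq_iteratedFDerivWithin_of_uniqueDiffOn (m := j) le_rfl
    (hslice s).uniqueDiffOn hp
  calc iteratedFDeriv ℝ j (fun x => F' (F (x, s), φ s)) x
      = iteratedFDerivWithin ℝ j ((fun y => F' (y, φ s)) ∘ (fun x => F (x, s)))
        {x : V | (x, s) ∈ U} x :=
        (iteratedFDerivWithin_of_isOpen j (hslice s) hp).symm
    _ = G (x, s) := this.symm
end

section
/- Let V be a C^∞ manifold of dimension n, let a : V × V → V and s : ℝ × V → V be C^∞ maps and 𝔷 ∈ V a point such that a, s, 𝔷 are respectively the addition, scalar multiplication and zero vector of an n-dimensional real vector space structure on V. Then the map Ψ : V → T_𝔷 V defined by Ψ(v) := (d/dt)|_{t=0} s(t,v) (the velocity at t = 0 of the smooth curve t ↦ s(t,v), which satisfies s(0,v) = 𝔷) is a smooth bijection which is linear from the vector space (V, a, s, 𝔷) to the tangent space T_𝔷 V (i.e., Ψ(a(v,w)) = Ψ(v) + Ψ(w) and Ψ(s(λ,v)) = λ·Ψ(v) for all v,w ∈ V, λ ∈ ℝ). Moreover, its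 differential at 𝔷 is the identity map of T_𝔷 V. -/
set_option maxHeartbeats 1000000


open scoped Manifold ContDiff
open Set Filter Topology

/-- Let `V` be a smooth `n`-manifold carrying smooth maps `a : V × V → V`,
`s : ℝ × V → V` and a point `𝔷 ∈ V` which are the addition, scalar multiplication and
zero vector of a real vector space structure on `V`. Then
`Ψ : V → T_𝔷V`, `Ψ(v) = (d/dt)|_{t=0} s(t,v)`, is a smooth bijection which is linear
from `(V, a, s, 𝔷)` to `T_𝔷V`, and its differential at `𝔷` is the identity of `T_𝔷V`. -/
theorem smooth_vector_space_structure_linearizes (n : ℕ) {V : Type*} [TopologicalSpace V]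
    [ChartedSpace (EuclideanSpace ℝ (Fin n)) V]
    [IsManifold (𝓡 n) (⊤ : ℕ∞) V]
    (a : V × V → V) (s : ℝ × V → V) (𝔷 : V)
    (ha : ContMDiff ((𝓡 n).prod (𝓡 n)) (𝓡 n) (⊤ : ℕ∞) a)
    (hs : ContMDiff ((modelWithCornersSelf ℝ ℝ).prod (𝓡 n)) (𝓡 n) (⊤ : ℕ∞) s)
    -- `(V, a, s, 𝔷)` is a real vector space:
    (h_add_assoc : ∀ u v w : V, a (a (u, v), w) = a (u, a (v, w)))
    (h_add_comm : ∀ u v : V, a (u, v) = a (v, u))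
    (h_zero_add : ∀ v : V, a (𝔷, v) = v)
    (h_add_neg : ∀ v : V, a (v, s (-1, v)) = 𝔷)
    (h_one_smul : ∀ v : V, s (1, v) = v)
    (h_zero_smul : ∀ v : V, s (0, v) = 𝔷)
    (h_mul_smul : ∀ (lam mu : ℝ) (v : V), s (lam * mu, v) = s (lam, s (mu, v)))
    (h_add_smul : ∀ (lam mu : ℝ) (v : V),
      s (lam + mu, v) = a (s (lam, v), s (mu, v)))
    (h_smul_add : ∀ (lam : ℝ) (u v : V),
      s (lam, a (u, v)) = a (s (lam, u), s (lam, v))) :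
    -- `Ψ v` lives in `TangentSpace (𝓡 n) 𝔷`, which is by definition `EuclideanSpace ℝ (Fin n)`:
    ∀ Ψ : V → EuclideanSpace ℝ (Fin n),
      (Ψ = fun v => (mfderiv (modelWithCornersSelf ℝ ℝ) (𝓡 n)
          (fun tt : ℝ => s (tt, v)) 0 :
            ℝ →L[ℝ] TangentSpace (𝓡 n) (s (0, v))) (1 : ℝ)) →
      ContMDiff (𝓡 n) (modelWithCornersSelf ℝ (EuclideanSpace ℝ (Fin n))) (⊤ : ℕ∞) Ψ ∧
      Function.Bijective Ψ ∧
      (∀ v w : V, Ψ (a (v, w)) = Ψ v + Ψ w) ∧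
      (∀ (lam : ℝ) (v : V), Ψ (s (lam, v)) = lam • Ψ v) ∧
      (∀ u : TangentSpace (𝓡 n) 𝔷,
        mfderiv (𝓡 n) (modelWithCornersSelf ℝ (EuclideanSpace ℝ (Fin n))) Ψ 𝔷 u = u) := by
  intro Ψ hΨ
  -- notation
  set e : PartialEquiv V (EuclideanSpace ℝ (Fin n)) := extChartAt (𝓡 n) 𝔷 with he
  set x₀ : EuclideanSpace ℝ (Fin n) := e 𝔷 with hx₀
  -- ## Algebraic preliminaries
  have add_zero' : ∀ v, a (v, 𝔷) = v := fun v => by rw [h_add_comm]; exact h_zero_add v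
  have s_zero : ∀ c : ℝ, s (c, 𝔷) = 𝔷 := fun c => by
    calc s (c, 𝔷) = s (c, s (0, 𝔷)) := by rw [h_zero_smul]
    _ = s (c * 0, 𝔷) := (h_mul_smul c 0 𝔷).symm
    _ = 𝔷 := by rw [mul_zero, h_zero_smul]
  have cancel : ∀ v w, a (v, s (-1, w)) = 𝔷 → v = w := by
    intro v w h
    have h2 := congrArg (fun u => a (u, w)) h
    beta_reduce at h2
    rw [h_zero_add, h_add_assoc, h_add_comm (s (-1,w)) w, h_add_neg, add_zero'] at h2
    exact h2
  have s_inv : ∀ (c : ℝ) v, c ≠ 0 → s (c⁻¹, s (c, v)) = v := fun c v hc => by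
    rw [← h_mul_smul, inv_mul_cancel₀ hc, h_one_smul]
  -- ## Curves are smooth
  have hc : ∀ v : V, ContMDiff 𝓘(ℝ, ℝ) (𝓡 n) (⊤ : ℕ∞) (fun t => s (t, v)) := fun v =>
    hs.comp (contMDiff_id.prodMk contMDiff_const)
  have hcm : ∀ (v : V) (t : ℝ), MDifferentiableAt 𝓘(ℝ, ℝ) (𝓡 n) (fun t => s (t, v)) t :=
    fun v t => (hc v t).mdifferentiableAt (by simp)
  -- ## Step C1 : `Ψ v` is the honest derivative of `t ↦ e (s (t, v))` at `0`
  have hdiffc : ∀ v : V, DifferentiableAt ℝ (fun t => e (s (t, v))) 0 := by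
    intro v
    have h := hcm v 0
    rw [mdifferentiableAt_iff] at h
    obtain ⟨-, h⟩ := h
    simp only [writtenInExtChartAt, extChartAt_model_space_eq_id, PartialEquiv.refl_coe,
      PartialEquiv.refl_symm, Function.comp_def, id_eq, h_zero_smul, range_id,
      differentiableWithinAt_univ, modelWithCornersSelf_coe] at h
    exact h
  have key : ∀ v : V, HasDerivAt (fun t => e (s (t, v))) (Ψ v) 0 := by
    intro v
    have hmd := hcm v 0
    have hΨv : Ψ v = deriv (fun t => e (s (t, v))) 0 := by
      rw [hΨ]
      show (mfderiv 𝓘(ℝ, ℝ) 𝓘(ℝ, EuclideanSpace ℝ (Fin n)) (fun tt : ℝ => s (tt, v)) 0 :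
        ℝ →L[ℝ] TangentSpace (𝓡 n) (s (0, v))) (1 : ℝ) = _
      rw [hmd.mfderiv]
      simp only [writtenInExtChartAt, extChartAt_model_space_eq_id, PartialEquiv.refl_coe,
        PartialEquiv.refl_symm, Function.comp_def, id_eq, h_zero_smul, range_id,
        fderivWithin_univ, modelWithCornersSelf_coe]
      rfl
    rw [hΨv]
    exact (hdiffc v).hasDerivAt
  -- ## Ψ 𝔷 = 0
  have psi_zero : Ψ 𝔷 = 0 := by
    have h0 : (fun t : ℝ => e (s (t, 𝔷))) = fun _ => e 𝔷 := by
      funext t; rw [s_zero]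
    have := key 𝔷
    rw [h0] at this
    have h1 := (hasDerivAt_const (0:ℝ) (e 𝔷))
    exact HasDerivAt.unique this h1
  -- ## in-chart smoothness of `s` and `a`
  have hF : ∀ t : ℝ, ContDiffAt ℝ ∞ (fun p : ℝ × EuclideanSpace ℝ (Fin n) => e (s (p.1, e.symm p.2))) (t, x₀) := by
    intro t
    have h := hs (t, 𝔷)
    rw [contMDiffAt_iff] at h
    obtain ⟨-, h⟩ := h
    simp only [extChartAt_prod, extChartAt_model_space_eq_id, PartialEquiv.prod_symm,
      PartialEquiv.refl_symm, PartialEquiv.prod_coe_symm, PartialEquiv.refl_coe, s_zero,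
      PartialEquiv.prod_coe, Function.comp_def, id_eq, ModelWithCorners.range_eq_univ] at h
    exact h.contDiffAt univ_mem
  have hG : ContDiffAt ℝ ∞ (fun p : EuclideanSpace ℝ (Fin n) × EuclideanSpace ℝ (Fin n) => e (a (e.symm p.1, e.symm p.2))) (x₀, x₀) := by
    have h := ha (𝔷, 𝔷)
    rw [contMDiffAt_iff] at h
    obtain ⟨-, h⟩ := h
    simp only [extChartAt_prod, extChartAt_model_space_eq_id, PartialEquiv.prod_symm,
      PartialEquiv.refl_symm, PartialEquiv.prod_coe_symm, PartialEquiv.refl_coe, h_zero_add,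
      PartialEquiv.prod_coe, Function.comp_def, id_eq, ModelWithCorners.range_eq_univ] at h
    exact h.contDiffAt univ_mem
  -- derivative of G at (x₀, x₀)
  set G : EuclideanSpace ℝ (Fin n) × EuclideanSpace ℝ (Fin n) → EuclideanSpace ℝ (Fin n) := fun p => e (a (e.symm p.1, e.symm p.2)) with hGdef
  set DG : EuclideanSpace ℝ (Fin n) × EuclideanSpace ℝ (Fin n) →L[ℝ] EuclideanSpace ℝ (Fin n) := fderiv ℝ G (x₀, x₀) with hDG
  have hGfd : HasFDerivAt G DG (x₀, x₀) := (hG.differentiableAt (by simp)).hasFDerivAt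
  have hz_mem : 𝔷 ∈ e.source := mem_extChartAt_source 𝔷
  have hsymm_x₀ : e.symm x₀ = 𝔷 := e.left_inv hz_mem
  have hDGapp : ∀ h k : EuclideanSpace ℝ (Fin n), DG (h, k) = h + k := by
    have hyid : (fun y => G (y, x₀)) =ᶠ[𝓝 x₀] id := by
      filter_upwards [extChartAt_target_mem_nhds (I := 𝓡 n) 𝔷] with y hy
      simp only [G, id_eq]
      rw [hsymm_x₀, add_zero', e.right_inv hy]
    have hzid : (fun y => G (x₀, y)) =ᶠ[𝓝 x₀] id := by
      filter_upwards [extChartAt_target_mem_nhds (I := 𝓡 n) 𝔷] with y hy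
      simp only [G, id_eq]
      rw [hsymm_x₀, h_zero_add, e.right_inv hy]
    have h1 : HasFDerivAt (G ∘ (fun y => (y, x₀)))
        (DG.comp (ContinuousLinearMap.inl ℝ _ _)) x₀ :=
      HasFDerivAt.comp (f := fun y => (y, x₀)) x₀ hGfd (hasFDerivAt_prodMk_left x₀ x₀)
    have h2 : HasFDerivAt (G ∘ (fun y => (x₀, y)))
        (DG.comp (ContinuousLinearMap.inr ℝ _ _)) x₀ :=
      HasFDerivAt.comp (f := fun y => (x₀, y)) x₀ hGfd (hasFDerivAt_prodMk_right x₀ x₀)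
    have hinl : DG.comp (ContinuousLinearMap.inl ℝ _ _) = ContinuousLinearMap.id ℝ _ :=
      h1.unique ((hasFDerivAt_id x₀).congr_of_eventuallyEq hyid)
    have hinr : DG.comp (ContinuousLinearMap.inr ℝ _ _) = ContinuousLinearMap.id ℝ _ :=
      h2.unique ((hasFDerivAt_id x₀).congr_of_eventuallyEq hzid)
    intro h k
    have hsplit : (h, k) = ((h, 0) : EuclideanSpace ℝ (Fin n) × EuclideanSpace ℝ (Fin n)) + (0, k) := by
      simp [Prod.ext_iff]
    rw [hsplit, map_add]
    have e1 : DG (h, 0) = h := by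
      have : DG (h, 0) = (DG.comp (ContinuousLinearMap.inl ℝ _ _)) h := rfl
      rw [this, hinl]; rfl
    have e2 : DG (0, k) = k := by
      have : DG (0, k) = (DG.comp (ContinuousLinearMap.inr ℝ _ _)) k := rfl
      rw [this, hinr]; rfl
    rw [e1, e2]
  -- ## linearity of Ψ
  have psi_smul : ∀ (lam : ℝ) (v : V), Ψ (s (lam, v)) = lam • Ψ v := by
    intro lam v
    have hg : HasDerivAt (fun t => e (s (t, v))) (Ψ v) ((fun t : ℝ => t * lam) 0) := by
      simpa using key v
    have hh : HasDerivAt (fun t : ℝ => t * lam) lam 0 := hasDerivAt_mul_const lam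
    have h1 : HasDerivAt ((fun t => e (s (t, v))) ∘ (fun t : ℝ => t * lam)) (lam • Ψ v) 0 :=
      hg.scomp 0 hh
    have hfun : ((fun t => e (s (t, v))) ∘ (fun t : ℝ => t * lam))
        = fun t => e (s (t, s (lam, v))) := by
      funext t
      simp only [Function.comp_apply]
      rw [h_mul_smul]
    rw [hfun] at h1
    exact (key (s (lam, v))).unique h1
  have psi_add : ∀ v w : V, Ψ (a (v, w)) = Ψ v + Ψ w := by
    intro v w
    have hsrc : ∀ u : V, ∀ᶠ t in 𝓝 (0:ℝ), s (t, u) ∈ e.source := by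
      intro u
      have hcont : ContinuousAt (fun t : ℝ => s (t, u)) 0 := (hcm u 0).continuousAt
      have hmem : e.source ∈ 𝓝 (s (0, u)) := by
        rw [h_zero_smul]; exact extChartAt_source_mem_nhds 𝔷
      exact hcont.preimage_mem_nhds hmem
    have hev : (fun t : ℝ => e (s (t, a (v, w))))
        =ᶠ[𝓝 0] fun t => G (e (s (t, v)), e (s (t, w))) := by
      filter_upwards [hsrc v, hsrc w] with t h1 h2
      simp only [G]
      rw [e.left_inv h1, e.left_inv h2, h_smul_add]
    have hGfd' : HasFDerivAt G DG (e (s (0, v)), e (s (0, w))) := by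
      rw [h_zero_smul v, h_zero_smul w]; exact hGfd
    have hpair : HasDerivAt (fun t => (e (s (t, v)), e (s (t, w)))) (Ψ v, Ψ w) 0 :=
      (key v).prodMk (key w)
    have h2 : HasDerivAt (fun t => G (e (s (t, v)), e (s (t, w)))) (DG (Ψ v, Ψ w)) 0 :=
      (hGfd'.comp_hasDerivAt 0 hpair :)
    have h3 : HasDerivAt (fun t : ℝ => e (s (t, a (v, w)))) (DG (Ψ v, Ψ w)) 0 :=
      h2.congr_of_eventuallyEq hev
    rw [(key (a (v, w))).unique h3, hDGapp]
  -- ## smoothness of Ψ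
  have psi_chart : ∀ v₀ : V, ContDiffAt ℝ ∞
      (fun y : EuclideanSpace ℝ (Fin n) => Ψ ((extChartAt (𝓡 n) v₀).symm y)) (extChartAt (𝓡 n) v₀ v₀) := by
    intro v₀
    have hs' : ContDiffAt ℝ ∞ (fun p : ℝ × EuclideanSpace ℝ (Fin n) =>
        e (s (p.1, (extChartAt (𝓡 n) v₀).symm p.2))) (0, extChartAt (𝓡 n) v₀ v₀) := by
      have h := hs (0, v₀)
      rw [contMDiffAt_iff] at h
      obtain ⟨-, h⟩ := h
      simp only [extChartAt_prod, extChartAt_model_space_eq_id, PartialEquiv.prod_symm,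
        PartialEquiv.refl_symm, PartialEquiv.prod_coe_symm, PartialEquiv.refl_coe, h_zero_smul,
        PartialEquiv.prod_coe, Function.comp_def, id_eq, ModelWithCorners.range_eq_univ] at h
      exact h.contDiffAt univ_mem
    have hswap : ContDiffAt ℝ ∞ (fun p : EuclideanSpace ℝ (Fin n) × ℝ =>
        e (s (p.2, (extChartAt (𝓡 n) v₀).symm p.1))) (extChartAt (𝓡 n) v₀ v₀, 0) :=
      (hs'.comp (extChartAt (𝓡 n) v₀ v₀, 0) (contDiffAt_snd.prodMk contDiffAt_fst) :)
    have hfd : ContDiffAt ℝ ∞ (fun y : EuclideanSpace ℝ (Fin n) =>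
        fderiv ℝ (fun t : ℝ => e (s (t, (extChartAt (𝓡 n) v₀).symm y))) 0)
        (extChartAt (𝓡 n) v₀ v₀) := by
      exact ContDiffAt.fderiv
        (f := fun y t => e (s (t, (extChartAt (𝓡 n) v₀).symm y)))
        (g := fun _ => (0 : ℝ)) hswap contDiffAt_const (by simp)
    have happ : ContDiffAt ℝ ∞ (fun y : EuclideanSpace ℝ (Fin n) =>
        fderiv ℝ (fun t : ℝ => e (s (t, (extChartAt (𝓡 n) v₀).symm y))) 0 1)
        (extChartAt (𝓡 n) v₀ v₀) :=
      ((ContinuousLinearMap.apply ℝ (EuclideanSpace ℝ (Fin n))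
        (1 : ℝ)).contDiff.contDiffAt).comp _ hfd
    have hfun : (fun y : EuclideanSpace ℝ (Fin n) => Ψ ((extChartAt (𝓡 n) v₀).symm y))
        = fun y => fderiv ℝ (fun t : ℝ => e (s (t, (extChartAt (𝓡 n) v₀).symm y))) 0 1 := by
      funext y
      rw [fderiv_apply_one_eq_deriv, (key ((extChartAt (𝓡 n) v₀).symm y)).deriv]
    rw [hfun]
    exact happ
  have psi_smooth : ContMDiff (𝓡 n) (modelWithCornersSelf ℝ (EuclideanSpace ℝ (Fin n))) (⊤ : ℕ∞) Ψ := by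
    intro v₀
    have hΨcont : ContinuousAt Ψ v₀ := by
      have hcong : ∀ᶠ v in 𝓝 v₀, (fun y => Ψ ((extChartAt (𝓡 n) v₀).symm y))
          ((extChartAt (𝓡 n) v₀) v) = Ψ v := by
        filter_upwards [extChartAt_source_mem_nhds (I := 𝓡 n) v₀] with v hv
        rw [(extChartAt (𝓡 n) v₀).left_inv hv]
      have h1 : ContinuousAt ((fun y => Ψ ((extChartAt (𝓡 n) v₀).symm y)) ∘
          (extChartAt (𝓡 n) v₀)) v₀ :=
        (psi_chart v₀).continuousAt.comp (continuousAt_extChartAt (I := 𝓡 n) v₀)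
      exact h1.congr hcong
    rw [contMDiffAt_iff]
    refine ⟨hΨcont, ?_⟩
    simp only [extChartAt_model_space_eq_id, PartialEquiv.refl_coe, id_eq, Function.comp_def,
      ModelWithCorners.range_eq_univ, contDiffWithinAt_univ]
    exact psi_chart v₀
  -- ## the differential of Ψ at 𝔷 is the identity
  -- second-derivative setup
  set F : ℝ × EuclideanSpace ℝ (Fin n) → EuclideanSpace ℝ (Fin n) :=
    fun p => e (s (p.1, e.symm p.2)) with hFdef
  obtain ⟨Ω₀, hΩ₀, hΩc₀⟩ := (hF 0).contDiffOn (m := 2)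
    (by decide) (by intro h; exact absurd h (by decide))
  obtain ⟨Ω, hΩsub, hΩo, hΩmem⟩ := mem_nhds_iff.1 hΩ₀
  have hΩc : ContDiffOn ℝ 2 F Ω := hΩc₀.mono hΩsub
  set f' : ℝ × EuclideanSpace ℝ (Fin n) →
      (ℝ × EuclideanSpace ℝ (Fin n) →L[ℝ] EuclideanSpace ℝ (Fin n)) := fderiv ℝ F with hf'def
  have hfd : ∀ p ∈ Ω, HasFDerivAt F (f' p) p := fun p hp =>
    (((hΩc.differentiableOn (by norm_num)).differentiableAt (hΩo.mem_nhds hp))).hasFDerivAt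
  have hfd' : ∀ t : ℝ, HasFDerivAt F (f' (t, x₀)) (t, x₀) := fun t =>
    ((hF t).differentiableAt (by simp)).hasFDerivAt
  set f'' := fderiv ℝ f' (0, x₀) with hf''def
  have hf'' : HasFDerivAt f' f'' (0, x₀) := by
    have h1 := (hF 0).fderiv_right (m := 1) (by decide)
    exact (h1.differentiableAt (by simp)).hasFDerivAt
  have hsymm2 : ∀ v w, f'' v w = f'' w v :=
    second_derivative_symmetric_of_eventually
      (Filter.eventually_iff_exists_mem.2 ⟨Ω, hΩo.mem_nhds hΩmem, hfd⟩) hf''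
  -- the partial derivative in the space direction
  set A : ℝ → (EuclideanSpace ℝ (Fin n) →L[ℝ] EuclideanSpace ℝ (Fin n)) :=
    fun t => fderiv ℝ (fun x => F (t, x)) x₀ with hAdef
  have hA : ∀ t, HasFDerivAt (fun x => F (t, x)) (A t) x₀ := by
    intro t
    have hpart : ContDiffAt ℝ ∞ (fun x => F (t, x)) x₀ :=
      (hF t).comp x₀ (contDiffAt_const.prodMk contDiffAt_id)
    exact (hpart.differentiableAt (by simp)).hasFDerivAt
  have hAeq : ∀ t, A t = (f' (t, x₀)).comp
      (ContinuousLinearMap.inr ℝ ℝ (EuclideanSpace ℝ (Fin n))) := by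
    intro t
    have h1 := HasFDerivAt.comp (f := fun x : EuclideanSpace ℝ (Fin n) => ((t : ℝ), x)) x₀
      (hfd' t) (hasFDerivAt_prodMk_right t x₀)
    exact (hA t).unique h1
  have hFx₀ : ∀ c : ℝ, F (c, x₀) = x₀ := by
    intro c; show e (s (c, e.symm x₀)) = x₀; rw [hsymm_x₀, s_zero]
  have hsmem : ∀ c : ℝ, ∀ᶠ x in 𝓝 x₀, s (c, e.symm x) ∈ e.source := by
    intro c
    have h2 : ContinuousAt (fun x : EuclideanSpace ℝ (Fin n) => ((c : ℝ), e.symm x)) x₀ :=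
      continuousAt_const.prodMk (continuousAt_extChartAt_symm 𝔷)
    have h3 : ContinuousAt s ((fun x : EuclideanSpace ℝ (Fin n) => ((c : ℝ), e.symm x)) x₀) := by
      show ContinuousAt s (c, e.symm x₀)
      rw [hsymm_x₀]
      exact (hs (c, 𝔷)).continuousAt
    have h1 : ContinuousAt (fun x : EuclideanSpace ℝ (Fin n) => s (c, e.symm x)) x₀ :=
      ContinuousAt.comp (f := fun x : EuclideanSpace ℝ (Fin n) => ((c : ℝ), e.symm x)) h3 h2
    apply h1.preimage_mem_nhds
    show e.source ∈ 𝓝 (s (c, e.symm x₀))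
    rw [hsymm_x₀, s_zero]
    exact extChartAt_source_mem_nhds 𝔷
  have hAadd : ∀ t u' : ℝ, A (t + u') = A t + A u' := by
    intro t u'
    have hev : (fun x => F (t + u', x)) =ᶠ[𝓝 x₀] fun x => G (F (t, x), F (u', x)) := by
      filter_upwards [hsmem t, hsmem u'] with x h1 h2
      show e (s (t + u', e.symm x)) = G (e (s (t, e.symm x)), e (s (u', e.symm x)))
      simp only [G]
      rw [e.left_inv h1, e.left_inv h2, h_add_smul]
    have hGfd2 : HasFDerivAt G DG (F (t, x₀), F (u', x₀)) := by
      rw [hFx₀, hFx₀]; exact hGfd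
    have h1 : HasFDerivAt (fun x => G (F (t, x), F (u', x)))
        (DG.comp ((A t).prod (A u'))) x₀ :=
      HasFDerivAt.comp (f := fun x => (F (t, x), F (u', x))) x₀ hGfd2 ((hA t).prodMk (hA u'))
    have h2 : HasFDerivAt (fun x => F (t + u', x)) (DG.comp ((A t).prod (A u'))) x₀ :=
      h1.congr_of_eventuallyEq hev
    have h3 := (hA (t + u')).unique h2
    rw [h3]
    refine ContinuousLinearMap.ext fun x => ?_
    simp only [ContinuousLinearMap.coe_comp', Function.comp_apply,
      ContinuousLinearMap.prod_apply, ContinuousLinearMap.add_apply]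
    exact hDGapp _ _
  have hA1 : A 1 = ContinuousLinearMap.id ℝ (EuclideanSpace ℝ (Fin n)) := by
    have hev1 : (fun x => F (1, x)) =ᶠ[𝓝 x₀] id := by
      filter_upwards [extChartAt_target_mem_nhds (I := 𝓡 n) 𝔷] with x hx
      show e (s (1, e.symm x)) = id x
      rw [h_one_smul, e.right_inv hx, id_eq]
    exact (hA 1).unique ((hasFDerivAt_id x₀).congr_of_eventuallyEq hev1)
  have hAcont : Continuous A := by
    rw [continuous_iff_continuousAt]
    intro t
    obtain ⟨U₀, hU₀, hUc₀⟩ := (hF t).contDiffOn (m := 2)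
      (by decide) (by intro h; exact absurd h (by decide))
    obtain ⟨U, hUsub, hUo, hUmem⟩ := mem_nhds_iff.1 hU₀
    have hcf : ContinuousOn f' U :=
      (hUc₀.mono hUsub).continuousOn_fderiv_of_isOpen hUo (by norm_num)
    have h0 : ContinuousAt (fun t' : ℝ => ((t' : ℝ), x₀)) t :=
      (continuous_id.prodMk continuous_const).continuousAt
    have h1 : ContinuousAt (f' ∘ (fun t' : ℝ => ((t' : ℝ), x₀))) t :=
      ContinuousAt.comp (f := fun t' : ℝ => ((t' : ℝ), x₀))
        (hcf.continuousAt (hUo.mem_nhds hUmem)) h0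
    set M := (ContinuousLinearMap.compL ℝ (EuclideanSpace ℝ (Fin n))
        (ℝ × EuclideanSpace ℝ (Fin n)) (EuclideanSpace ℝ (Fin n))).flip
      (ContinuousLinearMap.inr ℝ ℝ (EuclideanSpace ℝ (Fin n))) with hM
    have h2 : ContinuousAt (⇑M ∘ (f' ∘ (fun t' : ℝ => ((t' : ℝ), x₀)))) t :=
      M.continuous.continuousAt.comp h1
    have h3 : A = ⇑M ∘ (f' ∘ (fun t' : ℝ => ((t' : ℝ), x₀))) := funext fun t' => by
      rw [hAeq t']; rfl
    rw [h3]
    exact h2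
  have hAt : ∀ t : ℝ, A t = t • ContinuousLinearMap.id ℝ (EuclideanSpace ℝ (Fin n)) := by
    have hA0 : A 0 = A 0 + A 0 := by rw [← hAadd]; norm_num
    have hhom : ∀ t : ℝ, (AddMonoidHom.mk' A hAadd).toRealLinearMap hAcont t = A t := fun t =>
      congrFun (AddMonoidHom.coe_toRealLinearMap _ _) t
    intro t
    calc A t = A (t • (1:ℝ)) := by norm_num
    _ = t • A 1 := by rw [← hhom, ← hhom]; exact map_smul _ t 1
    _ = t • ContinuousLinearMap.id ℝ (EuclideanSpace ℝ (Fin n)) := by rw [hA1]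
  have hmix : ∀ h : EuclideanSpace ℝ (Fin n), f'' (1, 0) (0, h) = h := by
    intro h
    have h1 : HasFDerivAt (f' ∘ (fun t : ℝ => (t, x₀)))
        (f''.comp (ContinuousLinearMap.inl ℝ ℝ (EuclideanSpace ℝ (Fin n)))) 0 :=
      HasFDerivAt.comp (f := fun t : ℝ => (t, x₀)) 0 hf'' (hasFDerivAt_prodMk_left 0 x₀)
    have h2 : HasDerivAt (fun t : ℝ => f' (t, x₀)) (f'' (1, 0)) 0 := by
      have h2' := h1.hasDerivAt
      simpa [Function.comp_def] using h2'
    have h3 : HasDerivAt (fun t : ℝ => f' (t, x₀) ((0 : ℝ), h)) (f'' (1, 0) ((0:ℝ), h)) 0 := by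
      have h3' := h2.clm_apply (hasDerivAt_const (0:ℝ) ((0:ℝ), h))
      simpa using h3'
    have h4 : (fun t : ℝ => f' (t, x₀) ((0:ℝ), h)) = fun t : ℝ => t • h := by
      funext t
      have h5 : f' (t, x₀) ((0:ℝ), h) = A t h := by rw [hAeq t]; rfl
      rw [h5, hAt t]
      simp
    rw [h4] at h3
    have h6 : HasDerivAt (fun t : ℝ => t • h) ((1:ℝ) • h) 0 := (hasDerivAt_id 0).smul_const h
    have h7 := h3.unique h6
    rw [one_smul] at h7
    exact h7
  -- the function Ψ read in the chart at 𝔷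
  set ψ : EuclideanSpace ℝ (Fin n) → EuclideanSpace ℝ (Fin n) := fun x => Ψ (e.symm x) with hψdef
  have hψev : ψ =ᶠ[𝓝 x₀] fun x => f' ((0:ℝ), x) ((1:ℝ), (0 : EuclideanSpace ℝ (Fin n))) := by
    have hΩx : ∀ᶠ x : EuclideanSpace ℝ (Fin n) in 𝓝 x₀, ((0:ℝ), x) ∈ Ω :=
      ((continuous_const.prodMk continuous_id).continuousAt).preimage_mem_nhds
        (hΩo.mem_nhds hΩmem)
    filter_upwards [hΩx] with x hx
    have h1 : HasFDerivAt (F ∘ (fun t : ℝ => (t, x)))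
        ((f' ((0:ℝ), x)).comp (ContinuousLinearMap.inl ℝ ℝ (EuclideanSpace ℝ (Fin n)))) 0 :=
      HasFDerivAt.comp (f := fun t : ℝ => (t, x)) 0 (hfd _ hx) (hasFDerivAt_prodMk_left 0 x)
    have h2 : HasDerivAt (fun t : ℝ => F (t, x)) (f' ((0:ℝ), x) ((1:ℝ), 0)) 0 := by
      have h2' := h1.hasDerivAt
      simpa [Function.comp_def] using h2'
    exact (key (e.symm x)).unique h2
  have hψder : HasFDerivAt ψ (ContinuousLinearMap.id ℝ (EuclideanSpace ℝ (Fin n))) x₀ := by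
    have h1 : HasFDerivAt (f' ∘ (fun x : EuclideanSpace ℝ (Fin n) => ((0:ℝ), x)))
        (f''.comp (ContinuousLinearMap.inr ℝ ℝ (EuclideanSpace ℝ (Fin n)))) x₀ :=
      HasFDerivAt.comp (f := fun x : EuclideanSpace ℝ (Fin n) => ((0:ℝ), x)) x₀ hf''
        (hasFDerivAt_prodMk_right 0 x₀)
    have h2 : HasFDerivAt (fun x : EuclideanSpace ℝ (Fin n) => f' ((0:ℝ), x) ((1:ℝ), 0))
        ((ContinuousLinearMap.apply ℝ (EuclideanSpace ℝ (Fin n))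
            (((1:ℝ), (0 : EuclideanSpace ℝ (Fin n))) : ℝ × EuclideanSpace ℝ (Fin n))).comp
          (f''.comp (ContinuousLinearMap.inr ℝ ℝ (EuclideanSpace ℝ (Fin n))))) x₀ :=
      (ContinuousLinearMap.apply ℝ (EuclideanSpace ℝ (Fin n))
        (((1:ℝ), (0 : EuclideanSpace ℝ (Fin n))) : ℝ × EuclideanSpace ℝ (Fin n))).hasFDerivAt.comp x₀ h1
    have h3 : HasFDerivAt ψ
        ((ContinuousLinearMap.apply ℝ (EuclideanSpace ℝ (Fin n))
            (((1:ℝ), (0 : EuclideanSpace ℝ (Fin n))) : ℝ × EuclideanSpace ℝ (Fin n))).comp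
          (f''.comp (ContinuousLinearMap.inr ℝ ℝ (EuclideanSpace ℝ (Fin n))))) x₀ :=
      h2.congr_of_eventuallyEq hψev
    have h4 : ((ContinuousLinearMap.apply ℝ (EuclideanSpace ℝ (Fin n))
            (((1:ℝ), (0 : EuclideanSpace ℝ (Fin n))) : ℝ × EuclideanSpace ℝ (Fin n))).comp
          (f''.comp (ContinuousLinearMap.inr ℝ ℝ (EuclideanSpace ℝ (Fin n)))))
        = ContinuousLinearMap.id ℝ (EuclideanSpace ℝ (Fin n)) := by
      refine ContinuousLinearMap.ext fun h => ?_
      simp only [ContinuousLinearMap.coe_comp', Function.comp_apply,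
        ContinuousLinearMap.inr_apply, ContinuousLinearMap.apply_apply,
        ContinuousLinearMap.coe_id', id_eq]
      rw [hsymm2]
      exact hmix h
    rw [h4] at h3
    exact h3
  have hfderivψ : fderiv ℝ ψ x₀ = ContinuousLinearMap.id ℝ (EuclideanSpace ℝ (Fin n)) :=
    hψder.fderiv
  have psi_mfderiv : ∀ u : TangentSpace (𝓡 n) 𝔷,
      mfderiv (𝓡 n) (modelWithCornersSelf ℝ (EuclideanSpace ℝ (Fin n))) Ψ 𝔷 u = u := by
    intro u
    have hmda : MDifferentiableAt (𝓡 n) 𝓘(ℝ, EuclideanSpace ℝ (Fin n)) Ψ 𝔷 :=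
      (psi_smooth 𝔷).mdifferentiableAt (by simp)
    rw [hmda.mfderiv]
    simp only [writtenInExtChartAt, extChartAt_model_space_eq_id, PartialEquiv.refl_coe,
      Function.comp_def, id_eq, ModelWithCorners.range_eq_univ, fderivWithin_univ]
    show (fderiv ℝ ψ x₀) u = u
    rw [hfderivψ]
    rfl
  -- ## bijectivity
  have hψ0 : ψ x₀ = 0 := by
    show Ψ (e.symm x₀) = 0
    rw [hsymm_x₀, psi_zero]
  have hψstrict : HasStrictFDerivAt ψ
      ((ContinuousLinearEquiv.refl ℝ (EuclideanSpace ℝ (Fin n)) :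
        EuclideanSpace ℝ (Fin n) ≃L[ℝ] EuclideanSpace ℝ (Fin n)) :
        EuclideanSpace ℝ (Fin n) →L[ℝ] EuclideanSpace ℝ (Fin n)) x₀ := by
    have h1 : ContDiffAt ℝ ∞ ψ x₀ := psi_chart 𝔷
    have h2 := h1.hasStrictFDerivAt (by decide)
    rw [hfderivψ] at h2
    exact h2
  set T := hψstrict.toOpenPartialHomeomorph ψ with hT
  have hTcoe : ⇑T = ψ := hψstrict.toOpenPartialHomeomorph_coe
  have hTx₀ : x₀ ∈ T.source := hψstrict.mem_toOpenPartialHomeomorph_source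
  have hmap : Filter.map ψ (𝓝 x₀) = 𝓝 (ψ x₀) := hψstrict.map_nhds_eq_of_equiv
  have ker_triv : ∀ d : V, Ψ d = 0 → d = 𝔷 := by
    intro d hd
    have hcd : ContinuousAt (fun lam : ℝ => s (lam, d)) 0 := (hcm d 0).continuousAt
    have hm1 : ∀ᶠ lam in 𝓝 (0:ℝ), s (lam, d) ∈ e.source := by
      apply hcd.preimage_mem_nhds
      show e.source ∈ 𝓝 (s (0, d))
      rw [h_zero_smul]
      exact extChartAt_source_mem_nhds 𝔷
    have hc2 : ContinuousAt (fun lam : ℝ => e (s (lam, d))) 0 := by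
      have h1 : ContinuousAt (↑e) ((fun lam : ℝ => s (lam, d)) 0) := by
        show ContinuousAt (↑e) (s (0, d))
        rw [h_zero_smul]
        exact continuousAt_extChartAt 𝔷
      exact ContinuousAt.comp (f := fun lam : ℝ => s (lam, d)) h1 hcd
    have hm2 : ∀ᶠ lam in 𝓝 (0:ℝ), e (s (lam, d)) ∈ T.source := by
      apply hc2.preimage_mem_nhds
      show T.source ∈ 𝓝 (e (s (0, d)))
      rw [h_zero_smul]
      exact T.open_source.mem_nhds hTx₀
    have hev2 : ∀ᶠ lam in 𝓝[≠] (0:ℝ),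
        s (lam, d) ∈ e.source ∧ e (s (lam, d)) ∈ T.source :=
      (hm1.and hm2).filter_mono nhdsWithin_le_nhds
    obtain ⟨lam, ⟨hl1, hl2⟩, hlam0⟩ := (hev2.and eventually_mem_nhdsWithin).exists
    have hlam : lam ≠ 0 := hlam0
    have hval : ψ (e (s (lam, d))) = ψ x₀ := by
      show Ψ (e.symm (e (s (lam, d)))) = ψ x₀
      rw [e.left_inv hl1, psi_smul, hd, smul_zero, hψ0]
    have hinj := T.injOn
    rw [hTcoe] at hinj
    have heq : e (s (lam, d)) = x₀ := hinj hl2 hTx₀ hval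
    have hsz : s (lam, d) = 𝔷 := e.injOn hl1 hz_mem heq
    calc d = s (lam⁻¹, s (lam, d)) := (s_inv lam d hlam).symm
    _ = s (lam⁻¹, 𝔷) := by rw [hsz]
    _ = 𝔷 := s_zero _
  have psi_bij : Function.Bijective Ψ := by
    constructor
    · intro v w hvw
      apply cancel
      apply ker_triv
      rw [psi_add, psi_smul, hvw]
      simp
    · intro u
      have hr : range Ψ ∈ 𝓝 (0 : EuclideanSpace ℝ (Fin n)) := by
        rw [hψ0] at hmap
        rw [← hmap, mem_map]
        apply Filter.univ_mem'
        intro x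
        exact ⟨e.symm x, rfl⟩
      have htend : Tendsto (fun c : ℝ => c • u) (𝓝 0)
          (𝓝 (0 : EuclideanSpace ℝ (Fin n))) := by
        have h1 : Tendsto (fun c : ℝ => c • u) (𝓝 0) (𝓝 ((0:ℝ) • u)) :=
          ((continuous_id.smul continuous_const).tendsto 0)
        rwa [zero_smul] at h1
      have hev0 : ∀ᶠ c in 𝓝 (0:ℝ), c • u ∈ range Ψ := mem_map.1 (htend hr)
      have hev : ∀ᶠ c in 𝓝[≠] (0:ℝ), c • u ∈ range Ψ := hev0.filter_mono nhdsWithin_le_nhds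
      obtain ⟨c, hcu, hc0⟩ := (hev.and eventually_mem_nhdsWithin).exists
      have hc : c ≠ 0 := hc0
      obtain ⟨v, hv⟩ := hcu
      refine ⟨s (c⁻¹, v), ?_⟩
      rw [psi_smul, hv, smul_smul, inv_mul_cancel₀ hc, one_smul]
  exact ⟨psi_smooth, psi_bij, psi_add, psi_smul, psi_mfderiv⟩
end
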